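/- Suppose ω is a simple random walk path on Z^2 whose support (set of visited sites) contains M disjoint occurrences of the pattern Q, where Q has visited sites {(0,0), (−1,0)} and unvisited sites {(1,0), (0,−1), (0,1), (−1,1)} (all relative to the center). Then deg C(ω) ≥ 2^M: there are at least 2^M distinct walks with the same contact matrix as ω. -/

import Mathlib

open Finset

/-- The unit step of a simple walk on `ℤ^n` given a direction `d`. -/
def stepVec (n : ℕ) (d : Fin n × Bool) : Fin n → ℤ :=
  fun j => if j = d.1 then (if d.2 then 1 else -1) else 0

/-- Position after `i` steps of the walk encoded by the step sequence `s`. -/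
def pos {n N : ℕ} (s : Fin N → Fin n × Bool) (i : ℕ) : Fin n → ℤ :=
  ∑ k ∈ Finset.univ.filter (fun k : Fin N => (k : ℕ) < i), stepVec n (s k)

/-- Contact matrix: `1` iff positions at distinct times agree. -/
def cm {n N : ℕ} (s : Fin N → Fin n × Bool) : Fin (N + 1) → Fin (N + 1) → Bool :=
  fun i j => decide ((i : ℕ) ≠ (j : ℕ) ∧ pos s i = pos s j)

/-- Degeneracy: number of walks of length `N` sharing the contact matrix of `s`. -/
def degC {n N : ℕ} (s : Fin N → Fin n × Bool) : ℕ :=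
  (Finset.univ.filter (fun s' : Fin N → Fin n × Bool => cm s' = cm s)).card

/-- Range: number of distinct sites visited. -/
def rangeRW {n N : ℕ} (s : Fin N → Fin n × Bool) : ℕ :=
  (Finset.univ.image (fun i : Fin (N + 1) => pos s (i : ℕ))).card

/-- Number of contact matrices realized by walks of length `N` on `ℤ^n`. -/
def W (n N : ℕ) : ℕ :=
  (Finset.univ.image (fun s : Fin N → Fin n × Bool => cm s)).card

noncomputable def gammaRW (n N : ℕ) : ℝ :=
  Real.log (W n N) / (N * Real.log (2 * n))

/-- Coarse-grained Shannon entropy of the contact-matrix partition, uniform measure. -/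
noncomputable def SC (n N : ℕ) : ℝ :=
  ∑ C : Fin (N + 1) → Fin (N + 1) → Bool,
    Real.negMulLog
      (((Finset.univ.filter (fun s : Fin N → Fin n × Bool => cm s = C)).card : ℝ) / (2 * n) ^ N)

noncomputable def deltaRW (n N : ℕ) : ℝ :=
  SC n N / (N * Real.log (2 * n))

/-- Expected range under the uniform measure. -/
noncomputable def ER (n N : ℕ) : ℝ :=
  (∑ s : Fin N → Fin n × Bool, (rangeRW s : ℝ)) / (2 * n) ^ N

/-- The support (set of visited sites) of the walk of length `N` encoded by `s`. -/
def support {n N : ℕ} (s : Fin N → Fin n × Bool) : Finset (Fin n → ℤ) :=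
  Finset.univ.image (fun i : Fin (N + 1) => pos s (i : ℕ))

/-- The pattern `Q` occurs at the center `ζ` in the support of the planar walk
`s`: `ζ` and `ζ + (-1,0)` are visited while `ζ + (1,0)`, `ζ + (0,-1)`,
`ζ + (0,1)` and `ζ + (-1,1)` are not. -/
def occursQ {N : ℕ} (s : Fin N → Fin 2 × Bool) (ζ : Fin 2 → ℤ) : Prop :=
  ζ ∈ support s ∧ ζ + ![-1, 0] ∈ support s ∧
    ζ + ![1, 0] ∉ support s ∧ ζ + ![0, -1] ∉ support s ∧
    ζ + ![0, 1] ∉ support s ∧ ζ + ![-1, 1] ∉ support s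

/-!
Fix a set `A` of pattern centres and move every visit to `ζ ∈ A` onto `ζ + (-1,1)`. Since
`ζ + (1,0)`, `ζ + (0,-1)` and `ζ + (0,1)` are unvisited, the walk can enter or leave `ζ` only
through `ζ + (-1,0)`, which is also adjacent to `ζ + (-1,1)`; so the moved sites still form a walk.
As `ζ + (-1,1)` is unvisited, no two sites are merged, so the contact matrix is unchanged.
Different sets `A` give different walks: for `ζ` in one set but not the other, the displacement
from the visit of `ζ + (-1,0)` to that of `ζ` is `(0,1)` in one walk and `(1,0)` in the other.
Hence the `2^M` subsets of the centres give `2^M` walks with the contact matrix of `s`.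
-/

def IsStep {n : ℕ} (v : Fin n → ℤ) : Prop := ∃ d, stepVec n d = v

theorem IsStep.neg {n : ℕ} {v : Fin n → ℤ} (hv : IsStep v) : IsStep (-v) := by
  obtain ⟨⟨i, b⟩, rfl⟩ := hv
  refine ⟨(i, !b), funext fun j => ?_⟩
  by_cases hj : j = i <;> cases b <;> simp [stepVec, hj]

theorem isStep_two_iff {v : Fin 2 → ℤ} :
    IsStep v ↔ v = ![1, 0] ∨ v = ![-1, 0] ∨ v = ![0, 1] ∨ v = ![0, -1] := by
  constructor
  · rintro ⟨⟨i, b⟩, rfl⟩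
    fin_cases i <;> cases b <;> decide
  · rintro (rfl | rfl | rfl | rfl)
    exacts [⟨(0, true), by decide⟩, ⟨(0, false), by decide⟩, ⟨(1, true), by decide⟩,
      ⟨(1, false), by decide⟩]

section Walk

variable {n N : ℕ}

theorem pos_zero (s : Fin N → Fin n × Bool) : pos s 0 = 0 := by
  simp [pos]

theorem pos_succ (s : Fin N → Fin n × Bool) {i : ℕ} (hi : i < N) :
    pos s (i + 1) = pos s i + stepVec n (s ⟨i, hi⟩) := by
  have hins : univ.filter (fun k : Fin N => (k : ℕ) < i + 1)
      = insert ⟨i, hi⟩ (univ.filter (fun k : Fin N => (k : ℕ) < i)) := by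
    ext k
    simp only [mem_filter, mem_univ, true_and, mem_insert, Fin.ext_iff]
    omega
  rw [pos, hins, sum_insert (by simp), pos, add_comm]

theorem mem_support_iff {s : Fin N → Fin n × Bool} {x : Fin n → ℤ} :
    x ∈ support s ↔ ∃ i ≤ N, pos s i = x := by
  simp only [support, mem_image, mem_univ, true_and]
  exact ⟨fun ⟨i, hi⟩ => ⟨i, Nat.lt_succ_iff.mp i.isLt, hi⟩,
    fun ⟨i, hi, hx⟩ => ⟨⟨i, Nat.lt_succ_of_le hi⟩, hx⟩⟩

theorem pos_mem_support (s : Fin N → Fin n × Bool) {i : ℕ} (hi : i ≤ N) :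
    pos s i ∈ support s :=
  mem_support_iff.mpr ⟨i, hi, rfl⟩

theorem isStep_pos_succ_sub (s : Fin N → Fin n × Bool) {i : ℕ} (hi : i < N) :
    IsStep (pos s (i + 1) - pos s i) :=
  ⟨s ⟨i, hi⟩, by rw [pos_succ s hi, add_sub_cancel_left]⟩

theorem exists_pos_eq_of_isStep (p : ℕ → Fin n → ℤ) (h0 : p 0 = 0)
    (hstep : ∀ i < N, IsStep (p (i + 1) - p i)) :
    ∃ s : Fin N → Fin n × Bool, ∀ i ≤ N, pos s i = p i := by
  choose d hd using hstep
  refine ⟨fun k => d k k.isLt, fun i hi => ?_⟩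
  induction i with
  | zero => rw [pos_zero, h0]
  | succ i ih => rw [pos_succ _ hi, ih (Nat.le_of_succ_le hi), hd i hi, add_sub_cancel]

theorem cm_eq_of_pos_eq_comp {m : ℕ} {s : Fin N → Fin n × Bool} {s' : Fin N → Fin m × Bool}
    {ψ : (Fin n → ℤ) → (Fin m → ℤ)} (hψ : Set.InjOn ψ (support s))
    (hpos : ∀ i ≤ N, pos s' i = ψ (pos s i)) : cm s' = cm s := by
  funext i j
  have hi := Nat.lt_succ_iff.mp i.isLt
  have hj := Nat.lt_succ_iff.mp j.isLt
  simp only [cm, hpos _ hi, hpos _ hj,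
    hψ.eq_iff (pos_mem_support s hi) (pos_mem_support s hj)]

theorem exists_cm_eq_of_injOn_of_isStep (s : Fin N → Fin n × Bool)
    (φ : (Fin n → ℤ) → (Fin n → ℤ)) (hφ : Set.InjOn φ (support s))
    (hstep : ∀ i < N, IsStep (φ (pos s (i + 1)) - φ (pos s i))) :
    ∃ s' : Fin N → Fin n × Bool, cm s' = cm s ∧ ∀ i ≤ N, pos s' i = φ (pos s i) - φ 0 := by
  obtain ⟨s', hs'⟩ := exists_pos_eq_of_isStep (fun i => φ (pos s i) - φ 0)
    (by simp [pos_zero]) (fun i hi => by simpa using hstep i hi)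
  exact ⟨s', cm_eq_of_pos_eq_comp ((sub_left_injective (b := φ 0)).comp_injOn hφ) hs', hs'⟩

end Walk

section Shift

variable {N : ℕ} {s : Fin N → Fin 2 × Bool} {A : Finset (Fin 2 → ℤ)}

def shiftOn (A : Finset (Fin 2 → ℤ)) (x : Fin 2 → ℤ) : Fin 2 → ℤ :=
  if x ∈ A then x + ![-1, 1] else x

theorem occursQ.not_occursQ_left {ζ : Fin 2 → ℤ} (h : occursQ s ζ) :
    ¬ occursQ s (ζ + ![-1, 0]) := fun h' => by
  have := h'.2.2.1
  rw [add_assoc, show (![-1, 0] + ![1, 0] : Fin 2 → ℤ) = 0 by decide, add_zero] at this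
  exact this h.1

theorem occursQ.isStep_sub_shift {x y : Fin 2 → ℤ} (hx : occursQ s x) (hy : y ∈ support s)
    (hxy : IsStep (y - x)) : IsStep (y - (x + ![-1, 1])) := by
  obtain ⟨-, -, hE, hS, -, -⟩ := hx
  have hy' : y = x + (y - x) := by abel
  rw [show y - (x + ![-1, 1]) = (y - x) - ![-1, 1] by abel]
  rcases isStep_two_iff.mp hxy with h | h | h | h <;> rw [h] at hy' ⊢
  · exact absurd (hy' ▸ hy) hE
  · exact isStep_two_iff.mpr (by decide)
  · exact isStep_two_iff.mpr (by decide)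
  · exact absurd (hy' ▸ hy) hS

theorem isStep_shiftOn_sub (hA : ∀ ζ ∈ A, occursQ s ζ) {x y : Fin 2 → ℤ}
    (hx : x ∈ support s) (hy : y ∈ support s) (hxy : IsStep (y - x)) :
    IsStep (shiftOn A y - shiftOn A x) := by
  unfold shiftOn
  by_cases hxA : x ∈ A <;> by_cases hyA : y ∈ A <;> simp only [hxA, hyA, if_true, if_false]
  · rwa [add_sub_add_right_eq_sub]
  · exact (hA x hxA).isStep_sub_shift hy hxy
  · simpa using ((hA y hyA).isStep_sub_shift hx (by simpa using hxy.neg)).neg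
  · exact hxy

theorem shiftOn_injOn (hA : ∀ ζ ∈ A, occursQ s ζ) : Set.InjOn (shiftOn A) (support s) := by
  intro x hx y hy h
  unfold shiftOn at h
  by_cases hxA : x ∈ A <;> by_cases hyA : y ∈ A <;> simp only [hxA, hyA, if_true, if_false] at h
  · exact add_right_cancel h
  · exact absurd (h ▸ hy) (hA x hxA).2.2.2.2.2
  · exact absurd (h ▸ hx) (hA y hyA).2.2.2.2.2
  · exact h

theorem shiftOn_walk_ne {B : Finset (Fin 2 → ℤ)} (hA : ∀ ζ ∈ A, occursQ s ζ)
    (hB : ∀ ζ ∈ B, occursQ s ζ) {s₁ s₂ : Fin N → Fin 2 × Bool}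
    (h₁ : ∀ i ≤ N, pos s₁ i = shiftOn A (pos s i) - shiftOn A 0)
    (h₂ : ∀ i ≤ N, pos s₂ i = shiftOn B (pos s i) - shiftOn B 0)
    {ζ : Fin 2 → ℤ} (hζA : ζ ∈ A) (hζB : ζ ∉ B) : s₁ ≠ s₂ := by
  rintro rfl
  have hζ := hA ζ hζA
  obtain ⟨i, hi, hpi⟩ := mem_support_iff.mp hζ.1
  obtain ⟨j, hj, hpj⟩ := mem_support_iff.mp hζ.2.1
  have key : shiftOn A ζ - shiftOn A (ζ + ![-1, 0]) = shiftOn B ζ - shiftOn B (ζ + ![-1, 0]) :=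
    calc _ = pos s₁ i - pos s₁ j := by rw [h₁ i hi, h₁ j hj, sub_sub_sub_cancel_right, hpi, hpj]
      _ = _ := by rw [h₂ i hi, h₂ j hj, sub_sub_sub_cancel_right, hpi, hpj]
  have hA' : ζ + ![-1, 0] ∉ A := fun h => hζ.not_occursQ_left (hA _ h)
  have hB' : ζ + ![-1, 0] ∉ B := fun h => hζ.not_occursQ_left (hB _ h)
  simp only [shiftOn, hζA, hζB, hA', hB', if_true, if_false, add_sub_add_left_eq_sub,
    sub_add_cancel_left] at key
  exact absurd key (by decide)

end Shift

/-- If the support of a planar walk contains `M` occurrences of the pattern `Q`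
at distinct (hence disjoint) centers, then at least `2^M` walks share its
contact matrix: `deg C(ω) ≥ 2^M`. -/
theorem deg_ge_two_pow_of_pattern_occurrences {N : ℕ}
    (s : Fin N → Fin 2 × Bool) (M : ℕ)
    (T : Finset (Fin 2 → ℤ)) (hT : T.card = M)
    (hocc : ∀ ζ ∈ T, occursQ s ζ) :
    2 ^ M ≤ degC s := by
  have hsub : ∀ A ∈ T.powerset, ∀ ζ ∈ A, occursQ s ζ :=
    fun A hA ζ hζ => hocc ζ (mem_powerset.mp hA hζ)
  have hwalk : ∀ A ∈ T.powerset, ∃ s' : Fin N → Fin 2 × Bool, cm s' = cm s ∧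
      ∀ i ≤ N, pos s' i = shiftOn A (pos s i) - shiftOn A 0 := fun A hA =>
    exists_cm_eq_of_injOn_of_isStep s _ (shiftOn_injOn (hsub A hA)) fun i hi =>
      isStep_shiftOn_sub (hsub A hA) (pos_mem_support s hi.le) (pos_mem_support s hi)
        (isStep_pos_succ_sub s hi)
  choose! w hw_cm hw_pos using hwalk
  have hinj : Set.InjOn w T.powerset := fun A hA B hB h => ext fun ζ =>
    ⟨fun hζA => by_contra fun hζB =>
      shiftOn_walk_ne (hsub A hA) (hsub B hB) (hw_pos A hA) (hw_pos B hB) hζA hζB h,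
     fun hζB => by_contra fun hζA =>
      shiftOn_walk_ne (hsub B hB) (hsub A hA) (hw_pos B hB) (hw_pos A hA) hζB hζA h.symm⟩
  calc 2 ^ M = #T.powerset := by rw [card_powerset, hT]
    _ ≤ degC s := card_le_card_of_injOn w (fun A hA => by simp [hw_cm A hA]) hinj
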